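/- Let G be a totally disconnected, locally compact Hausdorff topological group and α a tidy bicontinuous automorphism of G; then P_α is a closed subgroup with α(P_α) = P_α. Let V be a compact open subgroup of G tidy for α, and let W be a compact open subgroup of the topological group P_α that is tidy for the restriction of α^{-1} to P_α; set W' = ⋂_{n≥0} α^{-n}(W). Then the indices [α^{-1}(V_-) : V_-] and [α^{-1}(W') : W'] are finite and equal. (This expresses the scale identity s_G(α^{-1}) = s_{P_α}(α^{-1}|_{P_α}).) -/

import Mathlib

open Filter Topology Set Pointwise MeasureTheory
open scoped ENNReal

variable {G : Type*} [Group G] [TopologicalSpace G] [IsTopologicalGroup G]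

/-- `V₊ = ⋂ n ≥ 0, α^n(V)`. -/
def posPart (α : MulAut G) (V : Set G) : Set G := ⋂ n : ℕ, ⇑(α ^ n) '' V

/-- `V₋ = ⋂ n ≥ 0, α^{-n}(V)`. -/
def negPart (α : MulAut G) (V : Set G) : Set G := ⋂ n : ℕ, ⇑(α⁻¹ ^ n) '' V

/-- `V₊₊ = ⋃ n ≥ 0, α^n(V₊)`. -/
def ppPart (α : MulAut G) (V : Set G) : Set G := ⋃ n : ℕ, ⇑(α ^ n) '' posPart α V

/-- `V₋₋ = ⋃ n ≥ 0, α^{-n}(V₋)`. -/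
def mmPart (α : MulAut G) (V : Set G) : Set G := ⋃ n : ℕ, ⇑(α⁻¹ ^ n) '' negPart α V

/-- A compact open subgroup `V ⊆ G` is tidy for `α` if (T1) `V = V₊V₋` and
(T2) `V₊₊` and `V₋₋` are closed in `G`. -/
def IsTidyFor (α : MulAut G) (V : Subgroup G) : Prop :=
  IsCompact (V : Set G) ∧ IsOpen (V : Set G) ∧
  (V : Set G) = posPart α (V : Set G) * negPart α (V : Set G) ∧
  IsClosed (ppPart α (V : Set G)) ∧ IsClosed (mmPart α (V : Set G))

/-- `α` is tidy if every identity neighbourhood of `G` contains a compact open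
subgroup of `G` tidy for `α`. -/
def IsTidy (α : MulAut G) : Prop :=
  ∀ U ∈ 𝓝 (1 : G), ∃ V : Subgroup G, IsTidyFor α V ∧ (V : Set G) ⊆ U

/-- The contraction group `U_α = {x : α^n(x) → 1}`. -/
def contractionGroup (α : MulAut G) : Set G :=
  {x : G | Tendsto (fun n : ℕ => (α ^ n) x) atTop (𝓝 1)}

/-- `P_α = {x : {α^n(x), n ∈ ℕ} relatively compact}`. -/
def parSet (α : MulAut G) : Set G :=
  {x : G | IsCompact (closure (Set.range fun n : ℕ => (α ^ n) x))}

/-- `M_α = {x : {α^n(x), n ∈ ℤ} relatively compact}`. -/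
def levSet (α : MulAut G) : Set G :=
  {x : G | IsCompact (closure (Set.range fun n : ℤ => (α ^ n) x))}

/-- A subgroup `V` of `G` contained in an `α`-stable subset `M ⊆ G` is a compact
open subgroup of the topological group `M` tidy for the restriction `α|_M`
(openness and closedness of `V`, `V₊₊`, `V₋₋` being relative to `M`). -/
def IsTidyForIn (α : MulAut G) (M : Set G) (V : Subgroup G) : Prop :=
  (V : Set G) ⊆ M ∧ IsCompact (V : Set G) ∧
  IsOpen ((Subtype.val ⁻¹' (V : Set G)) : Set M) ∧
  (V : Set G) = posPart α (V : Set G) * negPart α (V : Set G) ∧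
  IsClosed ((Subtype.val ⁻¹' ppPart α (V : Set G)) : Set M) ∧
  IsClosed ((Subtype.val ⁻¹' mmPart α (V : Set G)) : Set M)

/-- The restriction `α|_M` is tidy: every identity neighbourhood of the topological
group `M` contains a compact open subgroup of `M` tidy for `α|_M`. -/
def IsTidyOn (α : MulAut G) (M : Set G) : Prop :=
  ∀ U ∈ 𝓝 (1 : G), ∃ V : Subgroup G, IsTidyForIn α M V ∧ (V : Set G) ⊆ U

/-- `U_{α/H}`: the set of `x ∈ G` with `α^n(x) → 1` modulo `H`. -/
def relContraction (α : MulAut G) (H : Set G) : Set G :=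
  {x : G | ∀ V ∈ 𝓝 (1 : G), ∃ N : ℕ, ∀ n ≥ N, (α ^ n) x ∈ V * H}

/-- The set `K`: the intersection, over all compact open subgroups `O` of `G`, of the
closures of `{x ∈ M_α : α^n(x) ∈ O for all sufficiently large n}`. -/
def KSet (α : MulAut G) : Set G :=
  ⋂ O ∈ {O : Subgroup G | IsCompact (O : Set G) ∧ IsOpen (O : Set G)},
    closure {x ∈ levSet α | ∃ N : ℕ, ∀ n ≥ N, (α ^ n) x ∈ O}

/-- `V₋ = ⋂ n ≥ 0, α^{-n}(V)` as a subgroup. -/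
def negSubgroup (α : MulAut G) (V : Subgroup G) : Subgroup G :=
  ⨅ n : ℕ, V.map ((α⁻¹ ^ n : MulAut G) : G →* G)

/-- The index `[α^{-1}(H) : H]` of a subgroup `H` in `α^{-1}(H)` (equal to `0` if
this index is infinite). -/
noncomputable def idx (α : MulAut G) (H : Subgroup G) : ℕ :=
  H.relIndex (H.map ((α⁻¹ : MulAut G) : G →* G))


section Helpers

set_option linter.unusedSectionVars false

variable {H : Type*} [Group H] [TopologicalSpace H] [IsTopologicalGroup H]

lemma pow_apply_continuous {γ : MulAut H} (hc : Continuous ⇑γ) (n : ℕ) :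
    Continuous ⇑(γ ^ n) := by
  induction n with
  | zero =>
      have : ⇑(γ ^ 0) = id := by funext x; simp
      rw [this]; exact continuous_id
  | succ n ih =>
      have : ⇑(γ ^ (n + 1)) = ⇑(γ ^ n) ∘ ⇑γ := by
        funext x; simp [pow_succ, MulAut.mul_apply]
      rw [this]; exact ih.comp hc

lemma mem_image_pow {γ : MulAut H} {S : Set H} {n : ℕ} {x : H} :
    x ∈ ⇑(γ ^ n) '' S ↔ (γ⁻¹ ^ n) x ∈ S := by
  rw [inv_pow]
  constructor
  · rintro ⟨s, hs, rfl⟩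
    simpa using hs
  · intro h
    exact ⟨(γ ^ n)⁻¹ x, h, by simp⟩

lemma pow_apply_add (γ : MulAut H) (m n : ℕ) (x : H) :
    (γ ^ m) ((γ ^ n) x) = (γ ^ (m + n)) x := by
  rw [pow_add, MulAut.mul_apply]

lemma mem_negPart {γ : MulAut H} {S : Set H} {x : H} :
    x ∈ negPart γ S ↔ ∀ n : ℕ, (γ ^ n) x ∈ S := by
  simp only [_root_.negPart, Set.mem_iInter, mem_image_pow, inv_inv]

lemma mem_posPart {γ : MulAut H} {S : Set H} {x : H} :
    x ∈ posPart γ S ↔ ∀ n : ℕ, (γ⁻¹ ^ n) x ∈ S := by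
  simp only [_root_.posPart, Set.mem_iInter, mem_image_pow]

lemma posPart_subset {γ : MulAut H} {S : Set H} : posPart γ S ⊆ S := by
  intro x hx
  have := mem_posPart.1 hx 0
  simpa using this

lemma negPart_subset {γ : MulAut H} {S : Set H} : negPart γ S ⊆ S := by
  intro x hx
  have := mem_negPart.1 hx 0
  simpa using this

lemma negPart_stable {γ : MulAut H} {S : Set H} {x : H} (hx : x ∈ negPart γ S) (n : ℕ) :
    (γ ^ n) x ∈ negPart γ S := by
  rw [mem_negPart]
  intro m
  rw [pow_apply_add]
  exact mem_negPart.1 hx (m + n)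

lemma posPart_mem_image {γ : MulAut H} {S : Set H} {x : H} (hx : x ∈ posPart γ S) :
    x ∈ ⇑γ '' posPart γ S := by
  refine ⟨γ⁻¹ x, ?_, by simp⟩
  rw [mem_posPart]
  intro n
  have : (γ⁻¹ ^ n) (γ⁻¹ x) = (γ⁻¹ ^ (n + 1)) x := by
    have := pow_apply_add γ⁻¹ n 1 x
    simpa using this
  rw [this]
  exact mem_posPart.1 hx (n + 1)

lemma posPart_subset_image_pow {γ : MulAut H} {S : Set H} (k : ℕ) :
    posPart γ S ⊆ ⇑(γ ^ k) '' posPart γ S := by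
  induction k with
  | zero => intro x hx; exact ⟨x, hx, by simp⟩
  | succ k ih =>
      intro x hx
      obtain ⟨y, hy, rfl⟩ := ih hx
      obtain ⟨z, hz, rfl⟩ := posPart_mem_image hy
      refine ⟨z, hz, ?_⟩
      rw [pow_succ, MulAut.mul_apply]

-- inverse-closedness of pos/neg parts of a subgroup
lemma posPart_inv_mem {γ : MulAut H} {U : Subgroup H} {x : H}
    (hx : x ∈ posPart γ (U : Set H)) : x⁻¹ ∈ posPart γ (U : Set H) := by
  rw [mem_posPart] at hx ⊢
  intro n
  rw [map_inv]
  exact U.inv_mem (hx n)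

lemma negPart_inv_mem {γ : MulAut H} {U : Subgroup H} {x : H}
    (hx : x ∈ negPart γ (U : Set H)) : x⁻¹ ∈ negPart γ (U : Set H) := by
  rw [mem_negPart] at hx ⊢
  intro n
  rw [map_inv]
  exact U.inv_mem (hx n)

lemma t1_swap {γ : MulAut H} {U : Subgroup H}
    (h : (U : Set H) = negPart γ (U : Set H) * posPart γ (U : Set H)) :
    (U : Set H) = posPart γ (U : Set H) * negPart γ (U : Set H) := by
  ext x
  constructor
  · intro hx
    have hx' : x⁻¹ ∈ (U : Set H) := U.inv_mem hx
    rw [h] at hx'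
    obtain ⟨b, hb, a, ha, hba⟩ := hx'
    have hba' : b * a = x⁻¹ := hba
    have : x = a⁻¹ * b⁻¹ := by
      rw [← mul_inv_rev, hba', inv_inv]
    rw [this]
    exact Set.mul_mem_mul (posPart_inv_mem ha) (negPart_inv_mem hb)
  · intro hx
    obtain ⟨a, ha, b, hb, hab⟩ := hx
    have hab' : a * b = x := hab
    have hx' : x⁻¹ ∈ negPart γ (U : Set H) * posPart γ (U : Set H) := by
      have : x⁻¹ = b⁻¹ * a⁻¹ := by rw [← mul_inv_rev, hab']
      rw [this]
      exact Set.mul_mem_mul (negPart_inv_mem hb) (posPart_inv_mem ha)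
    rw [← h] at hx'
    simpa using U.inv_mem hx'

end Helpers

section CoreLemma

set_option linter.unusedSectionVars false

theorem bounded_forward_mem_tidy
    {H : Type*} [Group H] [TopologicalSpace H] [IsTopologicalGroup H]
    [T2Space H] [LocallyCompactSpace H]
    (γ : MulAut H) (hc : Continuous ⇑γ)
    (U : Subgroup H) (hUc : IsCompact (U : Set H))
    (hT1 : (U : Set H) = posPart γ (U : Set H) * negPart γ (U : Set H))
    (hpp : IsClosed (ppPart γ (U : Set H)))
    {x : H} (hxU : x ∈ U)
    (hx : IsCompact (closure (Set.range fun n : ℕ => (γ ^ n) x))) :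
    ∀ n : ℕ, (γ ^ n) x ∈ U := by
  classical
  set A : Set H := posPart γ (U : Set H) with hAdef
  have himc : ∀ n : ℕ, IsCompact (⇑(γ ^ n) '' (U : Set H)) :=
    fun n => hUc.image (pow_apply_continuous hc n)
  have hAclosed : IsClosed A := isClosed_iInter fun n => (himc n).isClosed
  have hAsub : A ⊆ (U : Set H) := posPart_subset
  have hAc : IsCompact A := hUc.of_isClosed_subset hAclosed hAsub
  -- the subgroup A₊ and the subgroup V₊₊
  have hmono_set : ∀ {m n : ℕ}, m ≤ n → ⇑(γ ^ m) '' A ⊆ ⇑(γ ^ n) '' A := by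
    intro m n hmn
    obtain ⟨k, rfl⟩ := Nat.exists_eq_add_of_le hmn
    rintro z ⟨y, hy, rfl⟩
    obtain ⟨w, hw, rfl⟩ := posPart_subset_image_pow (γ := γ) (S := (U : Set H)) k hy
    exact ⟨w, hw, by rw [pow_apply_add, Nat.add_comm m k]⟩
  let Apos : Subgroup H := ⨅ n : ℕ, U.map ((γ ^ n : MulAut H) : H →* H)
  have hAposcoe : (Apos : Set H) = A := by
    rw [hAdef]
    show (↑(⨅ n : ℕ, U.map ((γ ^ n : MulAut H) : H →* H)) : Set H) = _
    rw [Subgroup.coe_iInf]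
    simp only [Subgroup.coe_map, _root_.posPart]
    rfl
  let Smap : ℕ → Subgroup H := fun n => Apos.map ((γ ^ n : MulAut H) : H →* H)
  have hSmapcoe : ∀ n, (Smap n : Set H) = ⇑(γ ^ n) '' A := by
    intro n
    show (↑(Apos.map ((γ ^ n : MulAut H) : H →* H)) : Set H) = _
    rw [Subgroup.coe_map, hAposcoe]
    rfl
  have hmapmono : ∀ {m n : ℕ}, m ≤ n → Smap m ≤ Smap n := by
    intro m n hmn
    rw [← SetLike.coe_subset_coe, hSmapcoe, hSmapcoe]
    exact hmono_set hmn
  let Gpp : Subgroup H := ⨆ n : ℕ, Smap n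
  have hdir : Directed (· ≤ ·) Smap := (monotone_nat_of_le_succ
    (fun n => hmapmono (Nat.le_succ n))).directed_le
  have hGppcoe : (Gpp : Set H) = ppPart γ (U : Set H) := by
    show (↑(⨆ n : ℕ, Smap n) : Set H) = _
    rw [Subgroup.coe_iSup_of_directed hdir]
    unfold ppPart
    refine Set.iUnion_congr fun n => ?_
    rw [hSmapcoe]
  have hGppclosed : IsClosed (Gpp : Set H) := by rw [hGppcoe]; exact hpp
  haveI hLC : LocallyCompactSpace ↥Gpp := by
    exact hGppclosed.locallyCompactSpace
  haveI : Nonempty ↥Gpp := ⟨1⟩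
  -- subgroups of ↥Gpp
  let Sgp : ℕ → Subgroup ↥Gpp := fun n => (Smap n).subgroupOf Gpp
  have hSgpcoe : ∀ n, (Sgp n : Set ↥Gpp) = (Subtype.val) ⁻¹' (⇑(γ ^ n) '' A) := by
    intro n
    show (↑((Smap n).subgroupOf Gpp) : Set ↥Gpp) = _
    rw [Subgroup.coe_subgroupOf]
    rw [← hSmapcoe n]
    rfl
  have hSgpclosed : ∀ n, IsClosed (Sgp n : Set ↥Gpp) := by
    intro n
    rw [hSgpcoe]
    exact ((hAc.image (pow_apply_continuous hc n)).isClosed).preimage continuous_subtype_val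
  have hSgpuniv : ⋃ n, (Sgp n : Set ↥Gpp) = Set.univ := by
    apply Set.eq_univ_of_forall
    intro z
    have hz : (z : H) ∈ (Gpp : Set H) := z.2
    rw [hGppcoe] at hz
    obtain ⟨s, ⟨n, rfl⟩, hzs⟩ := hz
    refine Set.mem_iUnion.2 ⟨n, ?_⟩
    rw [hSgpcoe]
    exact hzs
  obtain ⟨n₀, y, hy⟩ := nonempty_interior_of_iUnion_of_closed hSgpclosed hSgpuniv
  have hopen0 : IsOpen (Sgp n₀ : Set ↥Gpp) :=
    Subgroup.isOpen_of_mem_nhds _ (mem_interior_iff_mem_nhds.1 hy)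
  have hSgpmono : ∀ {m n : ℕ}, m ≤ n → Sgp m ≤ Sgp n :=
    fun hmn => Subgroup.comap_mono (hmapmono hmn)
  have hopen : ∀ n, IsOpen (Sgp (n₀ + n) : Set ↥Gpp) :=
    fun n => Subgroup.isOpen_mono (hSgpmono (Nat.le_add_right n₀ n)) hopen0
  -- decompose x = a * b
  have hxU' : x ∈ (U : Set H) := hxU
  rw [hT1] at hxU'
  obtain ⟨a, ha, b, hb, hab⟩ := hxU'
  have hab' : a * b = x := hab
  have hborbit : ∀ n : ℕ, (γ ^ n) b ∈ (U : Set H) :=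
    fun n => negPart_subset (negPart_stable hb n)
  -- the closure of the forward orbit of a is compact and contained in Gpp
  have hrange_a : (Set.range fun n : ℕ => (γ ^ n) a) ⊆
      closure (Set.range fun n : ℕ => (γ ^ n) x) * ((U : Set H))⁻¹ := by
    rintro _ ⟨n, rfl⟩
    refine ⟨(γ ^ n) x, subset_closure (Set.mem_range_self n), ((γ ^ n) b)⁻¹,
      Set.inv_mem_inv.2 (hborbit n), ?_⟩
    show (γ ^ n) x * ((γ ^ n) b)⁻¹ = (γ ^ n) a
    rw [← hab', map_mul, mul_inv_cancel_right]
  have hKbig : IsCompact (closure (Set.range fun n : ℕ => (γ ^ n) x) * ((U : Set H))⁻¹) :=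
    hx.mul hUc.inv
  set C : Set H := closure (Set.range fun n : ℕ => (γ ^ n) a) with hCdef
  have hCc : IsCompact C :=
    hKbig.of_isClosed_subset isClosed_closure (closure_minimal hrange_a hKbig.isClosed)
  have hCpp : C ⊆ (Gpp : Set H) := by
    apply closure_minimal _ hGppclosed
    rintro _ ⟨n, rfl⟩
    rw [hGppcoe]
    exact Set.mem_iUnion.2 ⟨n, Set.mem_image_of_mem _ ha⟩
  -- pull back to the subtype and apply compactness
  have hC'c : IsCompact ((Subtype.val : ↥Gpp → H) ⁻¹' C) := by
    exact (hGppclosed.isClosedEmbedding_subtypeVal).isCompact_preimage hCc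
  have hC'cover : ((Subtype.val : ↥Gpp → H) ⁻¹' C) ⊆ ⋃ n, (Sgp (n₀ + n) : Set ↥Gpp) := by
    intro z hz
    have hz2 : (z : H) ∈ (Gpp : Set H) := z.2
    rw [hGppcoe] at hz2
    obtain ⟨s, ⟨m, rfl⟩, hzs⟩ := hz2
    refine Set.mem_iUnion.2 ⟨m, ?_⟩
    rw [hSgpcoe]
    exact hmono_set (Nat.le_add_left m n₀) hzs
  obtain ⟨t, ht⟩ := hC'c.elim_finite_subcover _ hopen hC'cover
  set N : ℕ := n₀ + t.sup id with hNdef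
  have hCN : C ⊆ ⇑(γ ^ N) '' A := by
    intro w hw
    have hzmem : (⟨w, hCpp hw⟩ : ↥Gpp) ∈ ⋃ i ∈ t, (Sgp (n₀ + i) : Set ↥Gpp) := ht hw
    obtain ⟨i, hi, hzi⟩ := Set.mem_iUnion₂.1 hzmem
    have hle : Sgp (n₀ + i) ≤ Sgp N := hSgpmono (Nat.add_le_add_left (Finset.le_sup (f := id) hi) n₀)
    have : (⟨w, hCpp hw⟩ : ↥Gpp) ∈ (Sgp N : Set ↥Gpp) := hle hzi
    rw [hSgpcoe] at this
    exact this
  have hforward : ∀ n : ℕ, (γ ^ n) a ∈ A := by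
    intro n
    have h1 : (γ ^ (N + n)) a ∈ C := subset_closure (Set.mem_range_self _)
    have h2 := hCN h1
    rw [mem_image_pow] at h2
    have h3 : (γ⁻¹ ^ N) ((γ ^ (N + n)) a) = (γ ^ n) a := by
      rw [← pow_apply_add γ N n a, inv_pow, MulAut.inv_apply_self]
    rwa [h3] at h2
  intro n
  have hmul : (γ ^ n) x = (γ ^ n) a * (γ ^ n) b := by rw [← hab', map_mul]
  have hmem : (γ ^ n) a * (γ ^ n) b ∈
      posPart γ (U : Set H) * negPart γ (U : Set H) :=
    Set.mul_mem_mul (hforward n) (negPart_stable hb n)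
  rw [← hT1] at hmem
  rw [hmul]
  exact hmem

end CoreLemma

section ParSetBasic

set_option linter.unusedSectionVars false

variable [T2Space G]

lemma image_closure_mulaut (α : MulAut G) (hc : Continuous ⇑α) (hc' : Continuous ⇑α⁻¹)
    (S : Set G) : ⇑α '' closure S = closure (⇑α '' S) := by
  apply subset_antisymm (image_closure_subset_closure_image hc)
  have h2 : ⇑α⁻¹ '' closure (⇑α '' S) ⊆ closure S := by
    refine (image_closure_subset_closure_image hc').trans ?_
    apply closure_mono
    rw [Set.image_image]
    intro z hz
    obtain ⟨s, hs, rfl⟩ := hz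
    simpa using hs
  intro z hz
  have : z = α (α⁻¹ z) := by simp
  rw [this]
  exact Set.mem_image_of_mem _ (h2 (Set.mem_image_of_mem _ hz))

/-- `P_α` as a subgroup of `G`. -/
def parSubgroup (α : MulAut G) : Subgroup G where
  carrier := parSet α
  one_mem' := by
    show IsCompact (closure (Set.range fun n : ℕ => (α ^ n) (1 : G)))
    have : (Set.range fun n : ℕ => (α ^ n) (1 : G)) = {(1 : G)} := by
      simp [Set.range_const]
    rw [this, closure_singleton]
    exact isCompact_singleton
  mul_mem' := by
    intro a b ha hb
    show IsCompact (closure (Set.range fun n : ℕ => (α ^ n) (a * b)))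
    have hsub : (Set.range fun n : ℕ => (α ^ n) (a * b)) ⊆
        closure (Set.range fun n : ℕ => (α ^ n) a) *
          closure (Set.range fun n : ℕ => (α ^ n) b) := by
      rintro _ ⟨n, rfl⟩
      exact ⟨(α ^ n) a, subset_closure (Set.mem_range_self n),
        (α ^ n) b, subset_closure (Set.mem_range_self n), (map_mul _ _ _).symm⟩
    have hK : IsCompact (closure (Set.range fun n : ℕ => (α ^ n) a) *
        closure (Set.range fun n : ℕ => (α ^ n) b)) := IsCompact.mul ha hb
    exact hK.of_isClosed_subset isClosed_closure (closure_minimal hsub hK.isClosed)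
  inv_mem' := by
    intro a ha
    show IsCompact (closure (Set.range fun n : ℕ => (α ^ n) a⁻¹))
    have hr : (Set.range fun n : ℕ => (α ^ n) a⁻¹) =
        (Set.range fun n : ℕ => (α ^ n) a)⁻¹ := by
      ext y
      simp only [Set.mem_inv, Set.mem_range, map_inv]
      constructor
      · rintro ⟨n, rfl⟩
        exact ⟨n, by simp⟩
      · rintro ⟨n, hn⟩
        exact ⟨n, by rw [hn]; simp⟩
    rw [hr, ← inv_closure]
    exact ha.inv

lemma mem_parSubgroup {α : MulAut G} {x : G} : x ∈ parSubgroup α ↔ x ∈ parSet α := Iff.rfl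

lemma coe_parSubgroup (α : MulAut G) : ((parSubgroup α : Subgroup G) : Set G) = parSet α := rfl

lemma parSet_apply_mem {α : MulAut G} (hc : Continuous ⇑α) (hc' : Continuous ⇑α⁻¹)
    {x : G} (hx : x ∈ parSet α) : α x ∈ parSet α := by
  have hcomm : ∀ n : ℕ, (α ^ n) (α x) = α ((α ^ n) x) := by
    intro n
    rw [← MulAut.mul_apply, ← MulAut.mul_apply, pow_mul_comm']
  show IsCompact (closure (Set.range fun n : ℕ => (α ^ n) (α x)))
  have hr : (Set.range fun n : ℕ => (α ^ n) (α x)) =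
      ⇑α '' (Set.range fun n : ℕ => (α ^ n) x) := by
    ext y
    constructor
    · rintro ⟨n, rfl⟩
      exact ⟨(α ^ n) x, Set.mem_range_self n, (hcomm n).symm⟩
    · rintro ⟨z, ⟨n, rfl⟩, rfl⟩
      exact ⟨n, hcomm n⟩
  rw [hr, ← image_closure_mulaut α hc hc']
  exact hx.image hc

lemma parSet_inv_apply_mem {α : MulAut G} (hc : Continuous ⇑α) (hc' : Continuous ⇑α⁻¹)
    {x : G} (hx : x ∈ parSet α) : α⁻¹ x ∈ parSet α := by
  have hcomm : ∀ n : ℕ, (α ^ n) (α⁻¹ x) = α⁻¹ ((α ^ n) x) := by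
    intro n
    rw [← MulAut.mul_apply, ← MulAut.mul_apply]
    congr 1
    exact (((Commute.refl α).pow_left n).inv_right).eq
  show IsCompact (closure (Set.range fun n : ℕ => (α ^ n) (α⁻¹ x)))
  have hr : (Set.range fun n : ℕ => (α ^ n) (α⁻¹ x)) =
      ⇑α⁻¹ '' (Set.range fun n : ℕ => (α ^ n) x) := by
    ext y
    constructor
    · rintro ⟨n, rfl⟩
      exact ⟨(α ^ n) x, Set.mem_range_self n, (hcomm n).symm⟩
    · rintro ⟨z, ⟨n, rfl⟩, rfl⟩
      exact ⟨n, hcomm n⟩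
  rw [hr, ← image_closure_mulaut α⁻¹ hc' (by simpa using hc)]
  exact hx.image hc'

lemma image_parSet_eq {α : MulAut G} (hc : Continuous ⇑α) (hc' : Continuous ⇑α⁻¹) :
    ⇑α '' parSet α = parSet α := by
  apply subset_antisymm
  · rintro _ ⟨x, hx, rfl⟩
    exact parSet_apply_mem hc hc' hx
  · intro x hx
    exact ⟨α⁻¹ x, parSet_inv_apply_mem hc hc' hx, by simp⟩

lemma inv_image_parSet_eq {α : MulAut G} (hc : Continuous ⇑α) (hc' : Continuous ⇑α⁻¹) :
    ⇑α⁻¹ '' parSet α = parSet α := by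
  apply subset_antisymm
  · rintro _ ⟨x, hx, rfl⟩
    exact parSet_inv_apply_mem hc hc' hx
  · intro x hx
    exact ⟨α x, parSet_apply_mem hc hc' hx, by simp⟩

end ParSetBasic

section TidyParSet

set_option linter.unusedSectionVars false

variable [T2Space G] [LocallyCompactSpace G]

lemma negPart_isClosed {α : MulAut G} (hc' : Continuous ⇑α⁻¹) {V : Subgroup G}
    (hVc : IsCompact (V : Set G)) : IsClosed (negPart α (V : Set G)) := by
  apply isClosed_iInter
  intro n
  exact (hVc.image (pow_apply_continuous hc' n)).isClosed

lemma negPart_isCompact {α : MulAut G} (hc' : Continuous ⇑α⁻¹) {V : Subgroup G}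
    (hVc : IsCompact (V : Set G)) : IsCompact (negPart α (V : Set G)) :=
  hVc.of_isClosed_subset (negPart_isClosed hc' hVc) negPart_subset

lemma negPart_subset_parSet {α : MulAut G} {V : Subgroup G}
    (hVc : IsCompact (V : Set G)) : negPart α (V : Set G) ⊆ parSet α := by
  intro x hx
  have hr : (Set.range fun n : ℕ => (α ^ n) x) ⊆ (V : Set G) := by
    rintro _ ⟨n, rfl⟩
    exact mem_negPart.1 hx n
  exact hVc.of_isClosed_subset isClosed_closure (closure_minimal hr hVc.isClosed)

/-- Key consequence of the core lemma: for a subgroup satisfying (T1) and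
closedness of `V₊₊`, one has `V₋ = V ∩ P_α`. -/
lemma negPart_eq_inter_parSet {α : MulAut G} (hc : Continuous ⇑α) {V : Subgroup G}
    (hVc : IsCompact (V : Set G))
    (hT1 : (V : Set G) = posPart α (V : Set G) * negPart α (V : Set G))
    (hpp : IsClosed (ppPart α (V : Set G))) :
    negPart α (V : Set G) = (V : Set G) ∩ parSet α := by
  apply subset_antisymm
  · intro x hx
    exact ⟨negPart_subset hx, negPart_subset_parSet hVc hx⟩
  · rintro x ⟨hxV, hxP⟩
    exact mem_negPart.2 (bounded_forward_mem_tidy α hc V hVc hT1 hpp hxV hxP)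

lemma parSet_isClosed {α : MulAut G} (hc : Continuous ⇑α) (hc' : Continuous ⇑α⁻¹)
    (hα : IsTidy α) : IsClosed (parSet α) := by
  obtain ⟨V, hV, -⟩ := hα Set.univ Filter.univ_mem
  obtain ⟨hVc, hVo, hT1, hpp, hmm⟩ := hV
  apply isClosed_of_closure_subset
  intro g hg
  have hne : ((g • (V : Set G)) ∩ parSet α).Nonempty := by
    apply mem_closure_iff.1 hg
    · exact hVo.smul g
    · exact ⟨1, V.one_mem, mul_one g⟩
  obtain ⟨p, hpgV, hpP⟩ := hne
  obtain ⟨u, huV, hup⟩ := hpgV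
  have hup' : g * u = p := hup
  have huinv : u⁻¹ = p⁻¹ * g := by
    rw [← hup']; group
  have hpcl : p ∈ closure (parSet α) := subset_closure hpP
  have hginv : u⁻¹ ∈ closure (parSet α) := by
    have h1 : p⁻¹ ∈ (parSubgroup α).topologicalClosure := by
      apply Subgroup.inv_mem
      exact subset_closure hpP
    have h2 : g ∈ (parSubgroup α).topologicalClosure := hg
    have h3 : p⁻¹ * g ∈ (parSubgroup α).topologicalClosure := Subgroup.mul_mem _ h1 h2
    rw [huinv]
    exact h3
  have hmem : u⁻¹ ∈ (V : Set G) ∩ closure (parSet α) := ⟨V.inv_mem huV, hginv⟩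
  have hsub : (V : Set G) ∩ closure (parSet α) ⊆ closure ((V : Set G) ∩ parSet α) :=
    hVo.inter_closure
  have h4 : u⁻¹ ∈ closure (negPart α (V : Set G)) := by
    rw [negPart_eq_inter_parSet hc hVc hT1 hpp]
    exact hsub hmem
  rw [(negPart_isClosed hc' hVc).closure_eq] at h4
  have h5 : u⁻¹ ∈ parSet α := negPart_subset_parSet hVc h4
  have : g = p * u⁻¹ := by rw [← hup']; group
  rw [this]
  exact Subgroup.mul_mem (parSubgroup α) hpP h5

end TidyParSet

section IndexLemmas

set_option linter.unusedSectionVars false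

lemma coe_mulaut_hom (σ : MulAut G) : ⇑((σ : G →* G)) = ⇑σ := rfl

lemma relindex_ne_zero_of_open_in (P : Subgroup G) (p q : Subgroup G) (hpq : p ≤ q)
    (hq : IsCompact (q : Set G)) (hqP : (q : Set G) ⊆ (P : Set G))
    {O : Set G} (hO : IsOpen O) (hpO : (p : Set G) = O ∩ (P : Set G)) :
    p.relIndex q ≠ 0 := by
  classical
  have h1O : (1 : G) ∈ O := by
    have h1 : (1 : G) ∈ (p : Set G) := p.one_mem
    rw [hpO] at h1
    exact h1.1
  have hcov : (q : Set G) ⊆ ⋃ y : ↥q, ((y : G) • O) := by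
    intro z hz
    exact Set.mem_iUnion.2 ⟨⟨z, hz⟩, ⟨1, h1O, mul_one z⟩⟩
  obtain ⟨t, ht⟩ := hq.elim_finite_subcover (fun y : ↥q => ((y : G) • O))
    (fun y => hO.smul _) hcov
  haveI : Finite (t : Set ↥q) := t.finite_toSet
  haveI : Finite (↥q ⧸ p.subgroupOf q) := by
    apply Finite.of_surjective
      (fun y : (t : Set ↥q) => ((y : ↥q) : ↥q ⧸ p.subgroupOf q))
    intro c
    induction c using QuotientGroup.induction_on with
    | _ z =>
      have hz : (z : G) ∈ (q : Set G) := z.2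
      obtain ⟨i, hit, hi⟩ := Set.mem_iUnion₂.1 (ht hz)
      obtain ⟨o, hoO, hio⟩ := hi
      have hio' : (i : G) * o = (z : G) := hio
      refine ⟨⟨i, hit⟩, ?_⟩
      show ((i : ↥q) : ↥q ⧸ p.subgroupOf q) = ((z : ↥q) : ↥q ⧸ p.subgroupOf q)
      rw [QuotientGroup.eq]
      rw [Subgroup.mem_subgroupOf]
      have hval : ((i⁻¹ * z : ↥q) : G) = o := by
        push_cast
        rw [← hio']
        group
      rw [hval]
      have hoP : o ∈ (P : Set G) := by
        have : o = (i : G)⁻¹ * (z : G) := by rw [← hio']; group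
        rw [this]
        exact P.mul_mem (P.inv_mem (hqP i.2)) (hqP z.2)
      have : o ∈ (p : Set G) := by rw [hpO]; exact ⟨hoO, hoP⟩
      exact this
  exact Subgroup.index_ne_zero_of_finite

lemma relindex_map_mulaut (σ : MulAut G) (A B : Subgroup G) :
    (A.map (σ : G →* G)).relIndex (B.map (σ : G →* G)) = A.relIndex B := by
  have hmapcomap : A.map (σ : G →* G) = A.comap ((σ⁻¹ : MulAut G) : G →* G) := by
    ext x
    simp only [Subgroup.mem_map, Subgroup.mem_comap]
    constructor
    · rintro ⟨a, ha, rfl⟩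
      show σ⁻¹ (σ a) ∈ A
      simpa using ha
    · intro h
      exact ⟨σ⁻¹ x, h, by show σ (σ⁻¹ x) = x; simp⟩
  rw [hmapcomap, Subgroup.relIndex_comap]
  congr 1
  rw [Subgroup.map_map]
  have hcomp : (((σ⁻¹ : MulAut G) : G →* G)).comp ((σ : MulAut G) : G →* G) =
      MonoidHom.id G := by
    ext x
    show σ⁻¹ (σ x) = x
    simp
  rw [hcomp, Subgroup.map_id]

lemma coe_negSubgroup (α : MulAut G) (V : Subgroup G) :
    ((negSubgroup α V : Subgroup G) : Set G) = negPart α (V : Set G) := by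
  show ((⨅ n : ℕ, V.map ((α⁻¹ ^ n : MulAut G) : G →* G) : Subgroup G) : Set G) = _
  rw [Subgroup.coe_iInf]
  rfl

lemma le_map_of_stable {α : MulAut G} (q : Subgroup G) (hstab : ∀ z ∈ q, α z ∈ q) :
    q ≤ q.map ((α⁻¹ : MulAut G) : G →* G) := by
  intro z hz
  exact ⟨α z, hstab z hz, by show α⁻¹ (α z) = z; simp⟩

end IndexLemmas

section Transfer

set_option linter.unusedSectionVars false

lemma posPart_inv' (α : MulAut G) (S : Set G) : posPart α⁻¹ S = negPart α S := rfl

lemma negPart_inv' (α : MulAut G) (S : Set G) : negPart α⁻¹ S = posPart α S := by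
  unfold _root_.negPart _root_.posPart
  rw [inv_inv]

lemma mmPart_inv' (α : MulAut G) (S : Set G) : mmPart α⁻¹ S = ppPart α S := by
  unfold _root_.mmPart _root_.ppPart
  rw [inv_inv, negPart_inv']

lemma isClosed_of_preimage_val {P S : Set G} (hP : IsClosed P) (hSP : S ⊆ P)
    (h : IsClosed ((Subtype.val ⁻¹' S) : Set P)) : IsClosed S := by
  have himg := hP.isClosedEmbedding_subtypeVal.isClosedMap _ h
  rwa [Subtype.image_preimage_coe, Set.inter_eq_self_of_subset_right hSP] at himg

variable [T2Space G]

lemma image_pow_parSet {α : MulAut G} (hc : Continuous ⇑α) (hc' : Continuous ⇑α⁻¹) (n : ℕ) :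
    ⇑(α ^ n) '' parSet α = parSet α := by
  induction n with
  | zero =>
      have : ⇑(α ^ 0) = id := by funext x; simp
      rw [this, Set.image_id]
  | succ n ih =>
      have hcoe : ⇑(α ^ (n + 1)) = ⇑(α ^ n) ∘ ⇑α := by
        funext x
        rw [pow_succ, MulAut.mul_apply]
        rfl
      rw [hcoe, Set.image_comp, image_parSet_eq hc hc', ih]

lemma ppPart_subset_parSet {α : MulAut G} (hc : Continuous ⇑α) (hc' : Continuous ⇑α⁻¹)
    {W : Subgroup G} (hWsub : (W : Set G) ⊆ parSet α) :
    ppPart α (W : Set G) ⊆ parSet α := by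
  intro z hz
  obtain ⟨s, ⟨n, rfl⟩, hzs⟩ := hz
  have h1 : posPart α (W : Set G) ⊆ parSet α := posPart_subset.trans hWsub
  have h2 : ⇑(α ^ n) '' posPart α (W : Set G) ⊆ ⇑(α ^ n) '' parSet α :=
    Set.image_mono h1
  rw [image_pow_parSet hc hc' n] at h2
  exact h2 hzs

end Transfer


set_option maxHeartbeats 1000000 in
/-- If `α` is tidy, then `P_α` is a closed `α`-stable subgroup, and
`s_G(α⁻¹) = s_{P_α}(α⁻¹|_{P_α})`: for `V ⊆ G` tidy for `α` and `W` a compact open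
subgroup of `P_α` tidy for `α⁻¹|_{P_α}`, with `W' = ⋂_{n≥0} α^{-n}(W)`, the indices
`[α⁻¹(V₋) : V₋]` and `[α⁻¹(W') : W']` are finite and equal. -/
theorem scale_inv_eq_scale_on_parSet
    {G : Type*} [Group G] [TopologicalSpace G] [IsTopologicalGroup G]
    [T2Space G] [LocallyCompactSpace G] [TotallyDisconnectedSpace G]
    (α : MulAut G) (hc : Continuous ⇑α) (hc' : Continuous ⇑α⁻¹)
    (hα : IsTidy α) :
    IsClosed (parSet α) ∧
    ⇑α '' parSet α = parSet α ∧
    ∀ (V W : Subgroup G), IsTidyFor α V →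
      IsTidyForIn α⁻¹ (parSet α) W →
        idx α (negSubgroup α V) ≠ 0 ∧ idx α (negSubgroup α W) ≠ 0 ∧
          idx α (negSubgroup α V) = idx α (negSubgroup α W) := by
  have hPclosed : IsClosed (parSet α) := parSet_isClosed hc hc' hα
  refine ⟨hPclosed, image_parSet_eq hc hc', ?_⟩
  intro V W hV hW
  obtain ⟨hVc, hVo, hT1V, hppV, hmmV⟩ := hV
  obtain ⟨hWsub, hWc, hWopen, hWT1', hWpp', hWmm'⟩ := hW
  set f : G →* G := ((α⁻¹ : MulAut G) : G →* G) with hfdef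
  -- the V side
  set Hv : Subgroup G := negSubgroup α V with hHvdef
  have hHvcoe : (Hv : Set G) = negPart α (V : Set G) := coe_negSubgroup α V
  have hHvform : (Hv : Set G) = (V : Set G) ∩ parSet α := by
    rw [hHvcoe]
    exact negPart_eq_inter_parSet hc hVc hT1V hppV
  have hHvcompact : IsCompact (Hv : Set G) := by
    rw [hHvcoe]; exact negPart_isCompact hc' hVc
  have hHvpar : (Hv : Set G) ⊆ parSet α := by
    rw [hHvcoe]; exact negPart_subset_parSet hVc
  have hstabHv : ∀ z ∈ Hv, α z ∈ Hv := by
    intro z hz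
    have hz' : z ∈ negPart α (V : Set G) := by rw [← hHvcoe]; exact hz
    have := negPart_stable hz' 1
    rw [pow_one] at this
    show α z ∈ (Hv : Set G)
    rw [hHvcoe]
    exact this
  -- the W side : W coincides with its own `negPart`
  have hWT1 : (W : Set G) = posPart α (W : Set G) * negPart α (W : Set G) := by
    apply t1_swap
    have h := hWT1'
    rw [negPart_inv'] at h
    exact h
  have hWppG : IsClosed (ppPart α (W : Set G)) := by
    have h := hWmm'
    rw [mmPart_inv'] at h
    exact isClosed_of_preimage_val hPclosed (ppPart_subset_parSet hc hc' hWsub) h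
  have hWforward : ∀ x ∈ W, ∀ n : ℕ, (α ^ n) x ∈ W := by
    intro x hx n
    exact bounded_forward_mem_tidy α hc W hWc hWT1 hWppG hx (hWsub hx) n
  have hWnegeq : negPart α (W : Set G) = (W : Set G) := by
    apply subset_antisymm negPart_subset
    intro x hx
    exact mem_negPart.2 (hWforward x hx)
  have hWstab : ∀ z ∈ W, α z ∈ W := by
    intro z hz
    have hz' : z ∈ negPart α (W : Set G) := by rw [hWnegeq]; exact hz
    have := negPart_stable hz' 1
    rw [pow_one, hWnegeq] at this
    exact this
  have hWsubgroup_eq : negSubgroup α W = W :=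
    SetLike.coe_injective (by rw [coe_negSubgroup, hWnegeq])
  -- the open form of W
  obtain ⟨Ow, hOwopen, hOwpre⟩ := isOpen_induced_iff.1 hWopen
  have hWform : (W : Set G) = Ow ∩ parSet α := by
    have himg := congrArg (fun s => (Subtype.val : ↥(parSet α) → G) '' s) hOwpre
    simp only [Subtype.image_preimage_coe] at himg
    rw [Set.inter_eq_self_of_subset_right hWsub] at himg
    rw [← himg, Set.inter_comm]
  -- the subgroup A = Hv ⊓ W and its properties
  set A : Subgroup G := Hv ⊓ W with hAdef
  have hAcoe : (A : Set G) = (Hv : Set G) ∩ (W : Set G) := rfl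
  have hAform : (A : Set G) = ((V : Set G) ∩ Ow) ∩ parSet α := by
    rw [hAcoe, hHvform, hWform]
    ext z
    constructor
    · rintro ⟨⟨h1, h2⟩, ⟨h3, h4⟩⟩; exact ⟨⟨h1, h3⟩, h2⟩
    · rintro ⟨⟨h1, h3⟩, h2⟩; exact ⟨⟨h1, h2⟩, ⟨h3, h2⟩⟩
  have hstabA : ∀ z ∈ A, α z ∈ A := by
    intro z hz
    exact ⟨hstabHv z hz.1, hWstab z hz.2⟩
  -- inclusions
  have hVle : Hv ≤ Hv.map f := le_map_of_stable Hv hstabHv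
  have hWle : W ≤ W.map f := le_map_of_stable W hWstab
  have hAle : A ≤ A.map f := le_map_of_stable A hstabA
  -- compactness and parSet-inclusion of images
  have hfim : ∀ S : Set G, ⇑f '' S = ⇑α⁻¹ '' S := fun S => rfl
  have hmapcompact : ∀ q : Subgroup G, IsCompact (q : Set G) →
      IsCompact ((q.map f : Subgroup G) : Set G) := by
    intro q hq
    rw [Subgroup.coe_map, hfim]
    exact hq.image hc'
  have hmappar : ∀ q : Subgroup G, (q : Set G) ⊆ parSet α →
      ((q.map f : Subgroup G) : Set G) ⊆ parSet α := by
    intro q hq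
    rw [Subgroup.coe_map, hfim]
    rw [← inv_image_parSet_eq hc hc']
    exact Set.image_mono hq
  have hAcompact : IsCompact (A : Set G) := by
    rw [hAcoe]
    exact hHvcompact.inter_right hWc.isClosed
  have hApar : (A : Set G) ⊆ parSet α := fun z hz => hHvpar hz.1
  -- finiteness of the four relevant indices (via the subgroup `parSubgroup α`)
  have hPcoe : ((parSubgroup α : Subgroup G) : Set G) = parSet α := rfl
  have nVV : Hv.relIndex (Hv.map f) ≠ 0 := by
    apply relindex_ne_zero_of_open_in (parSubgroup α) Hv (Hv.map f) hVle
      (hmapcompact Hv hHvcompact) (by rw [hPcoe]; exact hmappar Hv hHvpar) hVo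
    rw [hPcoe]; exact hHvform
  have nWW : W.relIndex (W.map f) ≠ 0 := by
    apply relindex_ne_zero_of_open_in (parSubgroup α) W (W.map f) hWle
      (hmapcompact W hWc) (by rw [hPcoe]; exact hmappar W hWsub) hOwopen
    rw [hPcoe]; exact hWform
  have nAV : A.relIndex Hv ≠ 0 := by
    apply relindex_ne_zero_of_open_in (parSubgroup α) A Hv inf_le_left
      hHvcompact (by rw [hPcoe]; exact hHvpar) (hVo.inter hOwopen)
    rw [hPcoe]; exact hAform
  have nAW : A.relIndex W ≠ 0 := by
    apply relindex_ne_zero_of_open_in (parSubgroup α) A W inf_le_right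
      hWc (by rw [hPcoe]; exact hWsub) (hVo.inter hOwopen)
    rw [hPcoe]; exact hAform
  -- the index computations
  have eV1 := Subgroup.relIndex_mul_relIndex A Hv (Hv.map f) inf_le_left hVle
  have eV2 := Subgroup.relIndex_mul_relIndex A (A.map f) (Hv.map f) hAle
    (Subgroup.map_mono inf_le_left)
  have eV3 : (A.map f).relIndex (Hv.map f) = A.relIndex Hv :=
    relindex_map_mulaut α⁻¹ A Hv
  have hVeq : Hv.relIndex (Hv.map f) = A.relIndex (A.map f) := by
    have h := eV1.trans eV2.symm
    rw [eV3] at h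
    exact Nat.eq_of_mul_eq_mul_left (Nat.pos_of_ne_zero nAV)
      (by rw [h, Nat.mul_comm])
  have eW1 := Subgroup.relIndex_mul_relIndex A W (W.map f) inf_le_right hWle
  have eW2 := Subgroup.relIndex_mul_relIndex A (A.map f) (W.map f) hAle
    (Subgroup.map_mono inf_le_right)
  have eW3 : (A.map f).relIndex (W.map f) = A.relIndex W :=
    relindex_map_mulaut α⁻¹ A W
  have hWeq : W.relIndex (W.map f) = A.relIndex (A.map f) := by
    have h := eW1.trans eW2.symm
    rw [eW3] at h
    exact Nat.eq_of_mul_eq_mul_left (Nat.pos_of_ne_zero nAW)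
      (by rw [h, Nat.mul_comm])
  refine ⟨?_, ?_, ?_⟩
  · show Hv.relIndex (Hv.map f) ≠ 0
    exact nVV
  · rw [hWsubgroup_eq]
    show W.relIndex (W.map f) ≠ 0
    exact nWW
  · rw [hWsubgroup_eq]
    show Hv.relIndex (Hv.map f) = W.relIndex (W.map f)
    rw [hVeq, hWeq]
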